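/- If (G,σ) is a best match graph, then (G,σ) contains no induced F3-graph. -/

import Mathlib

/-- A rooted (phylogenetic) tree on leaf set `V`, encoded by its hierarchy of
clusters `L(T(v))`, `v ∈ V(T)`: a rooted tree on leaf set `V` corresponds
exactly to a family of nonempty, pairwise compatible subsets of `V` containing
all singletons and `V` itself.  Together with a coloring `σ : V → M` this is a
leaf-colored tree. -/
structure PhyloTree (V : Type) where
  clusters : Set (Set V)
  compat : ∀ p ∈ clusters, ∀ q ∈ clusters, p ⊆ q ∨ q ⊆ p ∨ p ∩ q = ∅
  singleton_mem : ∀ v : V, {v} ∈ clusters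
  univ_mem : Set.univ ∈ clusters
  nonempty_mem : ∀ p ∈ clusters, p.Nonempty

namespace PhyloTree

variable {V M : Type}

/-- The cluster `L(T(lca(x,y)))` of the last common ancestor of `x` and `y`;
for inner vertices `u,v` of a tree one has `u ⪯_T v ↔ L(T(u)) ⊆ L(T(v))`. -/
def lcaSet (T : PhyloTree V) (x y : V) : Set V :=
  ⋂₀ {p : Set V | p ∈ T.clusters ∧ x ∈ p ∧ y ∈ p}

/-- `T` displays the triple `xy|z`, i.e. `lca(x,y) ≺ lca(x,z) = lca(y,z)`. -/
def Displays (T : PhyloTree V) (x y z : V) : Prop :=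
  T.lcaSet x y ⊂ T.lcaSet x z ∧ T.lcaSet x z = T.lcaSet y z

/-- `y` is a best match of `x` in the leaf-colored tree `(T,σ)`. -/
def BestMatch (T : PhyloTree V) (σ : V → M) (x y : V) : Prop :=
  σ x ≠ σ y ∧ ∀ y' : V, σ y' = σ y → T.lcaSet x y ⊆ T.lcaSet x y'

end PhyloTree

variable {V M : Type}

/-- `(T,σ)` explains `(G,σ)`, i.e. `(G,σ) = G(T,σ)`. -/
def Explains (T : PhyloTree V) (σ : V → M) (G : V → V → Prop) : Prop :=
  ∀ x y : V, G x y ↔ T.BestMatch σ x y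

/-- `(G,σ)` is a best match graph. -/
def IsBMG (G : V → V → Prop) (σ : V → M) : Prop :=
  ∃ T : PhyloTree V, Explains T σ G

/-- The triple `xy|y'` is informative for `(G,σ)`. -/
def InformativeTriple (G : V → V → Prop) (σ : V → M) (x y y' : V) : Prop :=
  x ≠ y ∧ x ≠ y' ∧ y ≠ y' ∧ σ x ≠ σ y ∧ σ y = σ y' ∧ G x y ∧ ¬ G x y'

/-- The triple `xy|y'` is forbidden for `(G,σ)`. -/
def ForbiddenTriple (G : V → V → Prop) (σ : V → M) (x y y' : V) : Prop :=
  x ≠ y ∧ x ≠ y' ∧ y ≠ y' ∧ σ x ≠ σ y ∧ σ y = σ y' ∧ G x y ∧ G x y'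

/-- `(G,σ)` is sf-colored: `σ` is proper and every vertex has an out-neighbor
of every color present in the graph other than its own. -/
def SfColored (G : V → V → Prop) (σ : V → M) : Prop :=
  (∀ x y : V, G x y → σ x ≠ σ y) ∧
  ∀ (x : V) (s : M), (∃ v : V, σ v = s) → s ≠ σ x → ∃ y : V, σ y = s ∧ G x y

/-- `(G,σ)` contains an induced F1-graph. -/
def HasF1 (G : V → V → Prop) (σ : V → M) : Prop :=
  ∃ x1 x2 y1 y2 : V,
    x1 ≠ x2 ∧ y1 ≠ y2 ∧
    σ x1 = σ x2 ∧ σ y1 = σ y2 ∧ σ x1 ≠ σ y1 ∧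
    ¬ G x1 x2 ∧ ¬ G x2 x1 ∧ ¬ G y1 y2 ∧ ¬ G y2 y1 ∧
    G x1 y1 ∧ G y2 x2 ∧ G y1 x2 ∧ ¬ G x1 y2 ∧ ¬ G y2 x1

/-- `(G,σ)` contains an induced F2-graph. -/
def HasF2 (G : V → V → Prop) (σ : V → M) : Prop :=
  ∃ x1 x2 y1 y2 : V,
    x1 ≠ x2 ∧ y1 ≠ y2 ∧
    σ x1 = σ x2 ∧ σ y1 = σ y2 ∧ σ x1 ≠ σ y1 ∧
    ¬ G x1 x2 ∧ ¬ G x2 x1 ∧ ¬ G y1 y2 ∧ ¬ G y2 y1 ∧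
    G x1 y1 ∧ G y1 x2 ∧ G x2 y2 ∧ ¬ G x1 y2

/-- `(G,σ)` contains an induced F3-graph. -/
def HasF3 (G : V → V → Prop) (σ : V → M) : Prop :=
  ∃ x1 x2 y1 y2 y3 : V,
    x1 ≠ x2 ∧ y1 ≠ y2 ∧ y1 ≠ y3 ∧ y2 ≠ y3 ∧
    σ x1 = σ x2 ∧ σ y1 = σ y2 ∧ σ y2 = σ y3 ∧ σ x1 ≠ σ y1 ∧
    ¬ G x1 x2 ∧ ¬ G x2 x1 ∧ ¬ G y1 y2 ∧ ¬ G y2 y1 ∧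
    ¬ G y1 y3 ∧ ¬ G y3 y1 ∧ ¬ G y2 y3 ∧ ¬ G y3 y2 ∧
    G x1 y1 ∧ G x2 y2 ∧ G x1 y3 ∧ G x2 y3 ∧ ¬ G x1 y2 ∧ ¬ G x2 y1

/-!
Let `T` explain `G`. Since `y₁` and `y₃` are both best matches of `x₁` and have the same color,
`lca(x₁,y₁) = lca(x₁,y₃)`; likewise `lca(x₂,y₂) = lca(x₂,y₃)`. Both clusters contain `y₃`, so
they are nested. If `lca(x₁,y₁) ⪯ lca(x₂,y₂)`, then `y₁` lies below `lca(x₂,y₂)` and is a best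
match of `x₂`; otherwise `y₂` is a best match of `x₁`. Either way an arc of the F3-graph that
must be missing is present.
-/

namespace PhyloTree

variable (T : PhyloTree V)

lemma mem_lcaSet_right (x y : V) : y ∈ T.lcaSet x y :=
  Set.mem_sInter.2 fun _ hp => hp.2.2

lemma lcaSet_subset {p : Set V} (hp : p ∈ T.clusters) {x y : V} (hx : x ∈ p) (hy : y ∈ p) :
    T.lcaSet x y ⊆ p :=
  Set.sInter_subset_of_mem ⟨hp, hx, hy⟩

lemma exists_cluster_of_not_subset_lcaSet {s : Set V} {x y : V} (hs : ¬ s ⊆ T.lcaSet x y) :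
    ∃ p ∈ T.clusters, x ∈ p ∧ y ∈ p ∧ ¬ s ⊆ p := by
  by_contra! h
  exact hs (Set.subset_sInter fun p ⟨hp, hx, hy⟩ => h p hp hx hy)

lemma lcaSet_subset_of_mem {x y z : V} (hz : z ∈ T.lcaSet x y) :
    T.lcaSet x z ⊆ T.lcaSet x y :=
  Set.subset_sInter fun _ ⟨hp, hx, hy⟩ => T.lcaSet_subset hp hx (T.lcaSet_subset hp hx hy hz)

/-- An lca-set need not itself be a cluster, so the argument goes through clusters `p ⊇ lca(a,b)`
and `q ⊇ lca(c,d)` witnessing the two non-inclusions: both contain `z`, yet neither contains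
the other. -/
lemma lcaSet_subset_or_subset_of_mem {a b c d z : V} (hab : z ∈ T.lcaSet a b)
    (hcd : z ∈ T.lcaSet c d) :
    T.lcaSet a b ⊆ T.lcaSet c d ∨ T.lcaSet c d ⊆ T.lcaSet a b := by
  by_contra! ⟨hnot₁, hnot₂⟩
  obtain ⟨q, hq, hcq, hdq, hAq⟩ := T.exists_cluster_of_not_subset_lcaSet hnot₁
  obtain ⟨p, hp, hap, hbp, hBp⟩ := T.exists_cluster_of_not_subset_lcaSet hnot₂
  have hAp := T.lcaSet_subset hp hap hbp
  have hBq := T.lcaSet_subset hq hcq hdq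
  rcases T.compat p hp q hq with hpq | hqp | hdisj
  · exact hAq (hAp.trans hpq)
  · exact hBp (hBq.trans hqp)
  · exact (Set.eq_empty_iff_forall_notMem.1 hdisj) z ⟨hAp hab, hBq hcd⟩

variable {T} {σ : V → M}

lemma BestMatch.lcaSet_eq {x y y' : V} (h : T.BestMatch σ x y) (h' : T.BestMatch σ x y')
    (hσ : σ y = σ y') : T.lcaSet x y = T.lcaSet x y' :=
  subset_antisymm (h.2 y' hσ.symm) (h'.2 y hσ)

lemma BestMatch.of_mem_lcaSet {x y y' : V} (h : T.BestMatch σ x y) (hσ : σ y' = σ y)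
    (hy' : y' ∈ T.lcaSet x y) : T.BestMatch σ x y' :=
  ⟨hσ ▸ h.1, fun y'' hy'' => (T.lcaSet_subset_of_mem hy').trans (h.2 y'' (hy''.trans hσ))⟩

lemma bestMatch_or_bestMatch_of_common_bestMatch {x₁ x₂ y₁ y₂ y₃ : V}
    (h₁₁ : T.BestMatch σ x₁ y₁) (h₂₂ : T.BestMatch σ x₂ y₂) (h₁₃ : T.BestMatch σ x₁ y₃)
    (h₂₃ : T.BestMatch σ x₂ y₃) (hσ₁₂ : σ y₁ = σ y₂) (hσ₂₃ : σ y₂ = σ y₃) :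
    T.BestMatch σ x₁ y₂ ∨ T.BestMatch σ x₂ y₁ := by
  have hy₃₁ : y₃ ∈ T.lcaSet x₁ y₁ :=
    h₁₁.lcaSet_eq h₁₃ (hσ₁₂.trans hσ₂₃) ▸ T.mem_lcaSet_right x₁ y₃
  have hy₃₂ : y₃ ∈ T.lcaSet x₂ y₂ := h₂₂.lcaSet_eq h₂₃ hσ₂₃ ▸ T.mem_lcaSet_right x₂ y₃
  rcases T.lcaSet_subset_or_subset_of_mem hy₃₁ hy₃₂ with h₁₂ | h₂₁
  · exact Or.inr (h₂₂.of_mem_lcaSet hσ₁₂ (h₁₂ (T.mem_lcaSet_right x₁ y₁)))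
  · exact Or.inl (h₁₁.of_mem_lcaSet hσ₁₂.symm (h₂₁ (T.mem_lcaSet_right x₂ y₂)))

end PhyloTree

theorem bmg_no_F3_general (G : V → V → Prop) (σ : V → M)
    (h : IsBMG G σ) : ¬ HasF3 G σ := by
  obtain ⟨T, hT⟩ := h
  rintro ⟨x₁, x₂, y₁, y₂, y₃, -, -, -, -, -, hσ₁₂, hσ₂₃, -, -, -, -, -, -, -, -, -,
    g₁₁, g₂₂, g₁₃, g₂₃, n₁₂, n₂₁⟩
  rcases PhyloTree.bestMatch_or_bestMatch_of_common_bestMatch ((hT _ _).1 g₁₁)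
      ((hT _ _).1 g₂₂) ((hT _ _).1 g₁₃) ((hT _ _).1 g₂₃) hσ₁₂ hσ₂₃ with h₁₂ | h₂₁
  · exact n₁₂ ((hT _ _).2 h₁₂)
  · exact n₂₁ ((hT _ _).2 h₂₁)

/-- A BMG contains no induced F3-graph. -/
theorem bmg_no_F3 [Fintype V] (G : V → V → Prop) (σ : V → M)
    (h : IsBMG G σ) : ¬ HasF3 G σ :=
  bmg_no_F3_general G σ h
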